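/- Suppose A is a subgroup of the circle Z = {diag(λ,λ,λ⁻²)} ⊂ SU(3), A is not contained in the centre of SU(3), and B is a subgroup of SU(3) conjugate to A, with B ⊆ Z as well. Then A = B. -/

import Mathlib

/-!
Write `a = diag(z, z, z⁻²)` for a non-central element of `A` and `u a u⁻¹ = diag(z', z', z'⁻²)`.
With `d`, `d'` these diagonals, `u a = (u a u⁻¹) u` says `u i j * (d j - d' i) = 0`. If `z' ≠ z`,
the top-left `2 × 2` block of `u` vanishes and `det u = 0`; hence `z' = z`, and as `z ≠ z⁻²` the
matrix `u` preserves the splitting `ℂ³ = ℂ² ⊕ ℂ`. So `u` centralizes the whole circle `Z`, and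
conjugation by `u` fixes `A` pointwise.
-/

open Matrix Complex

noncomputable section

noncomputable instance SUGroup {n : Type*} [Fintype n] [DecidableEq n] :
    Group ↥(Matrix.specialUnitaryGroup n ℂ) :=
  { (inferInstance : Monoid ↥(Matrix.specialUnitaryGroup n ℂ)) with
    inv := fun g => ⟨star g.val,
      Matrix.mem_specialUnitaryGroup_iff.mpr
        ⟨Unitary.star_mem (Matrix.mem_specialUnitaryGroup_iff.mp g.prop).1, by
          rw [Matrix.star_eq_conjTranspose, Matrix.det_conjTranspose,
            (Matrix.mem_specialUnitaryGroup_iff.mp g.prop).2, star_one]⟩⟩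
    inv_mul_cancel := fun g =>
      Subtype.ext (Matrix.mem_specialUnitaryGroup_iff.mp g.prop).1.1 }

abbrev SU3 := ↥(Matrix.specialUnitaryGroup (Fin 3) ℂ)

lemma SU3.coe_inv (g : SU3) :
    ((g⁻¹ : SU3) : Matrix (Fin 3) (Fin 3) ℂ) = star (g : Matrix (Fin 3) (Fin 3) ℂ) := rfl

lemma isDiag_mul {A B : Matrix (Fin 3) (Fin 3) ℂ} (hA : A.IsDiag) (hB : B.IsDiag) :
    (A * B).IsDiag := by
  intro i j hij
  rw [Matrix.mul_apply]
  refine Finset.sum_eq_zero fun k _ => ?_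
  rcases eq_or_ne i k with rfl | hik
  · rw [hB hij, mul_zero]
  · rw [hA hik, zero_mul]

/-- The diagonal maximal torus of `SU(3)`. -/
def diagTorus : Subgroup SU3 where
  carrier := {g | (g : Matrix (Fin 3) (Fin 3) ℂ).IsDiag}
  one_mem' := Matrix.isDiag_one
  mul_mem' := fun ha hb => isDiag_mul ha hb
  inv_mem' := fun {g} hg => by
    show (star (g : Matrix (Fin 3) (Fin 3) ℂ)).IsDiag
    exact hg.conjTranspose

/-- The circle subgroup `Z = {diag(z, z, z⁻²)}` of `SU(3)` (the centre of the
embedded `U(2)`). -/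
def circleZ : Subgroup SU3 where
  carrier := {g | ∃ z : ℂ,
    (g : Matrix (Fin 3) (Fin 3) ℂ) = Matrix.diagonal ![z, z, (z * z)⁻¹]}
  one_mem' := ⟨1, by
    have : ![(1 : ℂ), 1, (1 * 1 : ℂ)⁻¹] = fun _ => (1 : ℂ) := by
      funext i; fin_cases i <;> norm_num
    rw [this]
    show (1 : Matrix (Fin 3) (Fin 3) ℂ) = _
    rw [← Matrix.diagonal_one]⟩
  mul_mem' := by
    rintro a b ⟨z, hz⟩ ⟨w, hw⟩
    refine ⟨z * w, ?_⟩
    show (a : Matrix (Fin 3) (Fin 3) ℂ) * (b : Matrix (Fin 3) (Fin 3) ℂ) = _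
    rw [hz, hw, Matrix.diagonal_mul_diagonal]
    apply congrArg Matrix.diagonal
    funext i
    fin_cases i
    · simp
    · simp
    · show ![z, z, (z * z)⁻¹] 2 * ![w, w, (w * w)⁻¹] 2 = (z * w * (z * w))⁻¹
      show (z * z)⁻¹ * (w * w)⁻¹ = (z * w * (z * w))⁻¹
      rw [← mul_inv]
      congr 1
      ring
  inv_mem' := by
    rintro g ⟨z, hz⟩
    refine ⟨(starRingEnd ℂ) z, ?_⟩
    show star (g : Matrix (Fin 3) (Fin 3) ℂ) = _
    rw [hz, Matrix.star_eq_conjTranspose, Matrix.diagonal_conjTranspose]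
    apply congrArg Matrix.diagonal
    funext i
    fin_cases i
    · simp [Complex.star_def]
    · simp [Complex.star_def]
    · show star (![z, z, (z * z)⁻¹] 2) = ((starRingEnd ℂ) z * (starRingEnd ℂ) z)⁻¹
      show star ((z * z)⁻¹) = ((starRingEnd ℂ) z * (starRingEnd ℂ) z)⁻¹
      rw [star_inv₀, star_mul']
      rfl

theorem Subgroup.map_conj_eq_self_of_mem_centralizer {G : Type*} [Group G] {H : Subgroup G}
    {u : G} (hu : u ∈ Subgroup.centralizer H) : H.map (MulAut.conj u).toMonoidHom = H := by
  refine SetLike.coe_injective ?_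
  rw [Subgroup.coe_map]
  refine (Set.image_congr fun h hh => ?_).trans (Set.image_id' _)
  simp [(Subgroup.mem_centralizer_iff.mp hu h hh).symm]

namespace Matrix

variable {n R : Type*} [Fintype n] [DecidableEq n] [CommRing R] [NoZeroDivisors R]

theorem apply_eq_zero_of_mul_diagonal_eq_diagonal_mul {u : Matrix n n R} {d d' : n → R}
    (h : u * diagonal d = diagonal d' * u) {i j : n} (hij : d j ≠ d' i) : u i j = 0 := by
  have hentry : u i j * (d j - d' i) = 0 := by
    have := congrFun (congrFun h i) j
    rw [mul_diagonal, diagonal_mul] at this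
    linear_combination this
  exact (mul_eq_zero.mp hentry).resolve_right (sub_ne_zero.mpr hij)

theorem commute_diagonal_of_commute_diagonal {u : Matrix n n R} {d e : n → R}
    (h : Commute u (diagonal d)) (hde : ∀ i j, d i = d j → e i = e j) :
    Commute u (diagonal e) := by
  ext i j
  rw [mul_diagonal, diagonal_mul]
  by_cases hd : d j = d i
  · rw [hde j i hd, mul_comm]
  · rw [apply_eq_zero_of_mul_diagonal_eq_diagonal_mul h.eq hd, mul_zero, zero_mul]

end Matrix

theorem Matrix.det_fin_three_eq_zero_of_topLeft_eq_zero {R : Type*} [CommRing R]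
    {u : Matrix (Fin 3) (Fin 3) R} (h : ∀ i j : Fin 3, i ≠ 2 → j ≠ 2 → u i j = 0) :
    u.det = 0 := by
  rw [det_fin_three, h 0 0 (by decide) (by decide), h 0 1 (by decide) (by decide),
    h 1 0 (by decide) (by decide), h 1 1 (by decide) (by decide)]
  ring

theorem mem_center_of_eq_diagonal_of_eq_inv_mul_self {g : SU3} {z : ℂ}
    (hg : (g : Matrix (Fin 3) (Fin 3) ℂ) = diagonal ![z, z, (z * z)⁻¹]) (hz : z = (z * z)⁻¹) :
    g ∈ Subgroup.center SU3 := by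
  have hscalar : (g : Matrix (Fin 3) (Fin 3) ℂ) = scalar (Fin 3) z := by
    rw [hg, scalar_apply, ← hz]
    congr 1
    ext i
    fin_cases i <;> rfl
  refine Subgroup.mem_center_iff.mpr fun h => Subtype.ext ?_
  change (h : Matrix (Fin 3) (Fin 3) ℂ) * g = g * h
  rw [hscalar]
  exact (scalar_commute z (Commute.all z) _).symm

theorem mem_centralizer_circleZ_of_conj_mem {a u : SU3} (ha : a ∈ circleZ)
    (hnc : a ∉ Subgroup.center SU3) (hconj : u * a * u⁻¹ ∈ circleZ) :
    u ∈ Subgroup.centralizer circleZ := by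
  obtain ⟨z, hz⟩ := ha
  obtain ⟨z', hz'⟩ := hconj
  have hzw : z ≠ (z * z)⁻¹ := fun h => hnc (mem_center_of_eq_diagonal_of_eq_inv_mul_self hz h)
  have hintertwine : (u : Matrix (Fin 3) (Fin 3) ℂ) * diagonal ![z, z, (z * z)⁻¹] =
      diagonal ![z', z', (z' * z')⁻¹] * u := by
    rw [← hz, ← hz']
    change ((u * a : SU3) : Matrix (Fin 3) (Fin 3) ℂ) = ((u * a * u⁻¹ * u : SU3) : _)
    rw [inv_mul_cancel_right]
  have hz'z : z' = z := by
    by_contra hne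
    have hdet : (u : Matrix (Fin 3) (Fin 3) ℂ).det = 0 :=
      det_fin_three_eq_zero_of_topLeft_eq_zero fun i j hi hj =>
        apply_eq_zero_of_mul_diagonal_eq_diagonal_mul hintertwine <| by
          fin_cases i <;> fin_cases j <;>
            first | exact (hi rfl).elim | exact (hj rfl).elim | exact fun h => hne h.symm
    exact one_ne_zero ((mem_specialUnitaryGroup_iff.mp u.prop).2.symm.trans hdet)
  subst hz'z
  refine Subgroup.mem_centralizer_iff.mpr fun b ⟨w, hw⟩ => Subtype.ext ?_
  change (b : Matrix (Fin 3) (Fin 3) ℂ) * u = u * b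
  rw [hw]
  refine (commute_diagonal_of_commute_diagonal hintertwine fun i j h => ?_).eq.symm
  fin_cases i <;> fin_cases j <;> first | rfl | exact (hzw h).elim | exact (hzw h.symm).elim

/-- If `A` is a non-central subgroup of the circle
`Z = {diag(λ,λ,λ⁻²)} ⊂ SU(3)` and `B ⊆ Z` is conjugate to `A` in `SU(3)`,
then `A = B`. -/
theorem conjugate_noncentral_subgroups_of_circleZ_are_equal
    (A B : Subgroup SU3) (hA : A ≤ circleZ) (hB : B ≤ circleZ)
    (hnc : ¬ A ≤ Subgroup.center SU3)
    (hconj : ∃ u : SU3, Subgroup.map (MulAut.conj u).toMonoidHom A = B) :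
    A = B := by
  obtain ⟨u, rfl⟩ := hconj
  obtain ⟨a, haA, ha⟩ := SetLike.not_le_iff_exists.mp hnc
  have hu : u ∈ Subgroup.centralizer circleZ :=
    mem_centralizer_circleZ_of_conj_mem (hA haA) ha (hB (Subgroup.mem_map_of_mem _ haA))
  exact (Subgroup.map_conj_eq_self_of_mem_centralizer (Subgroup.centralizer_le hA hu)).symm
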